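/- arXiv:1311.3287 — 3 statements merged into one kernel-verified Lean document; each statement's English description precedes it below -/
import Mathlib

section
/- Under the setting of the whitening lemma, the whitened third-order tensor T := C₃ ×₁ W* ×₂ W* ×₃ W*, where C₃ = Σ_h π_h μ_h^{⊗3}, equals Σ_{h=1}^k π_h^{-1/2} v_h^{⊗3} where v_h = π_h^{1/2} W* μ_h, and the vectors v_1,...,v_k ∈ ℝ^k are orthonormal. In particular T is a symmetric tensor with orthogonal decomposition whose eigenvalues are π_h^{-1/2}. -/
open scoped RealInnerProductSpace

/-
Put `v h = √(π h) • W* μ h`, so that `⟪v h, a⟫ = √(π h) ⟪μ h, W a⟫`. The whitening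
condition `W* C₂ W = I` then reads `∑ h, ⟪v h, a⟫ ⟪v h, b⟫ = ⟪a, b⟫`, i.e. the square matrix with
rows `v h` satisfies `VᵀV = I`; being square, also `VVᵀ = I`, so the `v h` are orthonormal.
Substituting `⟪μ h, W a⟫ = (√(π h))⁻¹ ⟪v h, a⟫` into `C₃(Wa, Wb, Wc)` gives the decomposition.
-/

namespace EuclideanSpace

open scoped Matrix

variable {ι : Type*} [Fintype ι] [DecidableEq ι]

theorem inner_eq_of_apply_eq_single (u : EuclideanSpace ℝ ι)
    (f : EuclideanSpace ℝ ι →ₗ[ℝ] ℝ) (hu : ∀ i, u i = f (single i 1))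
    (a : EuclideanSpace ℝ ι) : ⟪u, a⟫ = f a := by
  suffices h : innerₛₗ ℝ u = f from LinearMap.congr_fun h a
  refine (basisFun ι ℝ).toBasis.ext fun i => ?_
  simp [inner_single_right, hu]

theorem orthonormal_of_sum_inner_mul_inner (v : ι → EuclideanSpace ℝ ι)
    (hv : ∀ a b, ∑ h, ⟪v h, a⟫ * ⟪v h, b⟫ = ⟪a, b⟫) : Orthonormal ℝ v := by
  set V : Matrix ι ι ℝ := Matrix.of fun h i => v h i
  have hVtV : Vᵀ * V = 1 := by
    ext i j
    have := hv (single i 1) (single j 1)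
    simp only [inner_single_right, orthonormal_iff_ite.mp orthonormal_single] at this
    simpa [V, Matrix.mul_apply, Matrix.one_apply] using this
  have hVVt : V * Vᵀ = 1 := mul_eq_one_comm.mp hVtV
  rw [orthonormal_iff_ite]
  intro g h
  simpa [V, Matrix.mul_apply, Matrix.one_apply, PiLp.inner_apply, mul_comm] using
    congrFun (congrFun hVVt g) h

end EuclideanSpace

theorem whitened_tensor_orthogonal_decomposition_general
    {F : Type*} [NormedAddCommGroup F] [InnerProductSpace ℝ F]
    {k : ℕ} (π : Fin k → ℝ) (μ : Fin k → F)
    (hπ : ∀ h, 0 < π h)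
    (W : EuclideanSpace ℝ (Fin k) →ₗ[ℝ] F)
    -- `W* C₂ W = I`
    (hW : ∀ a b : EuclideanSpace ℝ (Fin k),
      ∑ h, π h * (⟪μ h, W a⟫ * ⟪μ h, W b⟫) = ⟪a, b⟫)
    (v : Fin k → EuclideanSpace ℝ (Fin k))
    -- `v h = √(π h) • W* μ h`, coordinate-wise
    (hv : ∀ h i, v h i =
      Real.sqrt (π h) * ⟪μ h, W (EuclideanSpace.single i 1)⟫) :
    Orthonormal ℝ v ∧
      ∀ a b c : EuclideanSpace ℝ (Fin k),
        ∑ h, π h * (⟪μ h, W a⟫ * ⟪μ h, W b⟫ * ⟪μ h, W c⟫)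
          = ∑ h, (Real.sqrt (π h))⁻¹ * (⟪v h, a⟫ * ⟪v h, b⟫ * ⟪v h, c⟫) := by
  have hsqrt_sq h : Real.sqrt (π h) ^ 2 = π h := Real.sq_sqrt (hπ h).le
  have hinner h a : ⟪v h, a⟫ = Real.sqrt (π h) * ⟪μ h, W a⟫ :=
    EuclideanSpace.inner_eq_of_apply_eq_single (v h)
      (Real.sqrt (π h) • (innerₛₗ ℝ (μ h)).comp W) (hv h) a
  refine ⟨EuclideanSpace.orthonormal_of_sum_inner_mul_inner v fun a b => ?_, fun a b c => ?_⟩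
  · rw [← hW a b]
    refine Finset.sum_congr rfl fun h _ => ?_
    rw [hinner, hinner]
    linear_combination (⟪μ h, W a⟫ * ⟪μ h, W b⟫) * hsqrt_sq h
  · refine Finset.sum_congr rfl fun h _ => ?_
    rw [hinner, hinner, hinner]
    field_simp
    linear_combination (-(⟪μ h, W a⟫ * ⟪μ h, W b⟫ * ⟪μ h, W c⟫)) * hsqrt_sq h

/-- The whitened third-order tensor `T = C₃ ×₁ W* ×₂ W* ×₃ W*` (given by
`T(a,b,c) = C₃(Wa, Wb, Wc)`) has the orthogonal decomposition
`T = ∑ h, π h ^ (-1/2) • v h ⊗ v h ⊗ v h` with `v h = √(π h) • W* μ h`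
orthonormal. -/
theorem whitened_tensor_orthogonal_decomposition
    {F : Type*} [NormedAddCommGroup F] [InnerProductSpace ℝ F]
    {k : ℕ} (π : Fin k → ℝ) (μ : Fin k → F)
    (hπ : ∀ h, 0 < π h) (hind : LinearIndependent ℝ μ)
    (W : EuclideanSpace ℝ (Fin k) →ₗ[ℝ] F)
    -- `W* C₂ W = I`
    (hW : ∀ a b : EuclideanSpace ℝ (Fin k),
      ∑ h, π h * (⟪μ h, W a⟫ * ⟪μ h, W b⟫) = ⟪a, b⟫)
    (v : Fin k → EuclideanSpace ℝ (Fin k))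
    -- `v h = √(π h) • W* μ h`, coordinate-wise
    (hv : ∀ h i, v h i =
      Real.sqrt (π h) * ⟪μ h, W (EuclideanSpace.single i 1)⟫) :
    Orthonormal ℝ v ∧
      ∀ a b c : EuclideanSpace ℝ (Fin k),
        ∑ h, π h * (⟪μ h, W a⟫ * ⟪μ h, W b⟫ * ⟪μ h, W c⟫)
          = ∑ h, (Real.sqrt (π h))⁻¹ * (⟪v h, a⟫ * ⟪v h, b⟫ * ⟪v h, c⟫) :=
  whitened_tensor_orthogonal_decomposition_general π μ hπ W hW v hv
end

section
/- (Whitening perturbation bound.) Let C = M Diag(π) M* be a rank-k positive semidefinite operator on a Hilbert space F (π_h > 0, M with linearly independent columns), let Ĉ be a perturbation with ε := ‖C − Ĉ‖ satisfying ε < 0.5 σ_k(C), where σ_k(C) is the k-th largest singular value. Let Ŵ = Û_k Ŝ_k^{-1/2} be the whitening map built from the top-k eigendecomposition of B := 0.5(Ĉ + Ĉ*), and let W := Ŵ A D^{-1/2} A*, where Ŵ* C Ŵ = A D A* is an eigendecomposition. Then ‖Diag(π)^{1/2} M* (Ŵ − W)‖ ≤ 4ε / σ_k(C). -/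
/-!
Weyl's inequality, in its Courant–Fischer form, puts the top `k` eigenvalues of `B` above
`σ_k(C) - ε ≥ σ_k(C) / 2`, so `‖Ŵ‖² ≤ 2 / σ_k(C)`. Since `Ŵ* B Ŵ = I` and
`|⟪x, (C - B) x⟫| ≤ ε ‖x‖²`, the whitened matrix `Ŵ* C Ŵ = A D A*` is within `2ε / σ_k(C)` of the
identity, hence so is every `D_l`, and then also every `√D_l`. Finally
`‖Diag(π)^{1/2} M* x‖² = ⟪x, C x⟫`, and for `x = (Ŵ - W) a = Ŵ A (I - D^{-1/2}) A* a` this is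
`∑ l, (√D_l - 1)² (A* a)_l² ≤ (2ε / σ_k(C))² ‖a‖²`.
-/

open scoped RealInnerProductSpace Matrix

section

variable {F : Type*} [NormedAddCommGroup F] [InnerProductSpace ℝ F]

-- The `n`-th largest eigenvalue of a self-adjoint `T` is the greatest element of this set.
def courantFischerSet (T : F →L[ℝ] F) (n : ℕ) : Set ℝ :=
  {t | ∃ V : Submodule ℝ F, Module.finrank ℝ V = n ∧ ∀ x ∈ V, t * ‖x‖ ^ 2 ≤ ⟪x, T x⟫}

lemma courantFischerSet_antitone (T : F →L[ℝ] F) : Antitone (courantFischerSet T) := by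
  rintro m n hmn t ⟨V, hV, htV⟩
  obtain ⟨f, hf⟩ := exists_linearIndependent_of_le_finrank (R := ℝ) (M := V) (hV ▸ hmn)
  refine ⟨Submodule.span ℝ (Set.range (V.subtype ∘ f)), ?_,
    fun x hx => htV x (Submodule.span_le.mpr ?_ hx)⟩
  · rw [finrank_span_eq_card (hf.map' V.subtype V.ker_subtype), Fintype.card_fin]
  · rintro - ⟨j, rfl⟩
    exact (f j).2

lemma sub_mem_courantFischerSet {S T : F →L[ℝ] F} {ε : ℝ}
    (hST : ∀ x, |⟪x, S x⟫ - ⟪x, T x⟫| ≤ ε * ‖x‖ ^ 2) {n : ℕ} {t : ℝ}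
    (ht : t ∈ courantFischerSet S n) : t - ε ∈ courantFischerSet T n := by
  obtain ⟨V, hV, htV⟩ := ht
  refine ⟨V, hV, fun x hx => ?_⟩
  rw [sub_mul]
  linarith [htV x hx, (abs_le.mp (hST x)).2]

lemma abs_inner_self_sub_inner_symmPart_le {C Ĉ B : F →L[ℝ] F}
    (hB : ∀ x y : F, ⟪B x, y⟫ = (1 / 2) * (⟪Ĉ x, y⟫ + ⟪x, Ĉ y⟫)) (x : F) :
    |⟪x, C x⟫ - ⟪x, B x⟫| ≤ ‖C - Ĉ‖ * ‖x‖ ^ 2 := by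
  have hBĈ : ⟪x, B x⟫ = ⟪x, Ĉ x⟫ := by
    rw [real_inner_comm, hB, real_inner_comm (Ĉ x)]
    ring
  calc |⟪x, C x⟫ - ⟪x, B x⟫| = |⟪x, (C - Ĉ) x⟫| := by
        rw [hBĈ, sub_apply, inner_sub_right]
    _ ≤ ‖x‖ * (‖C - Ĉ‖ * ‖x‖) :=
        (abs_real_inner_le_norm _ _).trans (by gcongr; exact (C - Ĉ).le_opNorm x)
    _ = ‖C - Ĉ‖ * ‖x‖ ^ 2 := by ring

lemma sum_sq_sqrt_mul_inner_eq_inner {ι : Type*} [Fintype ι] {π : ι → ℝ} {μ : ι → F}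
    {C : F →L[ℝ] F} (hπ : ∀ h, 0 ≤ π h) (hC : ∀ x, C x = ∑ h, (π h * ⟪μ h, x⟫) • μ h) (y : F) :
    ∑ h, (√(π h) * ⟪μ h, y⟫) ^ 2 = ⟪y, C y⟫ := by
  rw [hC, inner_sum]
  refine Finset.sum_congr rfl fun h _ => ?_
  rw [real_inner_smul_right, mul_pow, Real.sq_sqrt (hπ h), real_inner_comm y]
  ring

section Whitening

variable {ι : Type*} [Fintype ι] {u : ι → F} {s : ι → ℝ}

noncomputable def whiten (u : ι → F) (s : ι → ℝ) (v : ι → ℝ) : F :=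
  ∑ i, ((√(s i))⁻¹ * v i) • u i

lemma inner_whiten_apply_whiten {B : F →L[ℝ] F} (hu : Orthonormal ℝ u)
    (hBu : ∀ i, B (u i) = s i • u i) (hs : ∀ i, 0 < s i) (v : ι → ℝ) :
    ⟪whiten u s v, B (whiten u s v)⟫ = v ⬝ᵥ v := by
  simp only [whiten, map_sum, map_smul, hBu, smul_smul, hu.inner_sum, dotProduct]
  refine Finset.sum_congr rfl fun i _ => ?_
  have hsi : (√(s i))⁻¹ * (√(s i))⁻¹ * s i = 1 := by
    rw [← mul_inv, Real.mul_self_sqrt (hs i).le, inv_mul_cancel₀ (hs i).ne']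
  simp only [starRingEnd_apply, star_trivial]
  linear_combination (v i * v i) * hsi

lemma norm_whiten_sq_le (hu : Orthonormal ℝ u) {m : ℝ} (hm : 0 < m) (hs : ∀ i, m ≤ s i)
    (v : ι → ℝ) : ‖whiten u s v‖ ^ 2 ≤ (v ⬝ᵥ v) / m := by
  rw [← real_inner_self_eq_norm_sq, whiten, hu.inner_sum, dotProduct, Finset.sum_div]
  refine Finset.sum_le_sum fun i _ => ?_
  have hsi : (√(s i))⁻¹ * (√(s i))⁻¹ = (s i)⁻¹ := by
    rw [← mul_inv, Real.mul_self_sqrt (hm.trans_le (hs i)).le]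
  simp only [starRingEnd_apply, star_trivial]
  calc (√(s i))⁻¹ * v i * ((√(s i))⁻¹ * v i) = v i * v i / s i := by
        linear_combination (v i * v i) * hsi
    _ ≤ v i * v i / m := div_le_div_of_nonneg_left (mul_self_nonneg _) hm (hs i)

lemma abs_inner_whiten_sub_dotProduct_le {B C : F →L[ℝ] F} {ε m : ℝ} (hε : 0 ≤ ε)
    (hCB : ∀ x, |⟪x, C x⟫ - ⟪x, B x⟫| ≤ ε * ‖x‖ ^ 2) (hu : Orthonormal ℝ u)
    (hBu : ∀ i, B (u i) = s i • u i) (hm : 0 < m) (hs : ∀ i, m ≤ s i) (v : ι → ℝ) :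
    |⟪whiten u s v, C (whiten u s v)⟫ - v ⬝ᵥ v|
      ≤ ε / m * (v ⬝ᵥ v) := by
  have h := hCB (whiten u s v)
  rw [inner_whiten_apply_whiten hu hBu (fun i => hm.trans_le (hs i))] at h
  calc _ ≤ ε * ((v ⬝ᵥ v) / m) := h.trans (by gcongr; exact norm_whiten_sq_le hu hm hs v)
    _ = ε / m * (v ⬝ᵥ v) := by ring

end Whitening

lemma inner_apply_apply_eq_dotProduct_mulVec {ι : Type*} [Fintype ι] [DecidableEq ι]
    (T : EuclideanSpace ℝ ι →ₗ[ℝ] F) (C : F →L[ℝ] F) {G : Matrix ι ι ℝ}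
    (hG : ∀ i j, ⟪T (EuclideanSpace.single i 1), C (T (EuclideanSpace.single j 1))⟫ = G i j)
    (v w : EuclideanSpace ℝ ι) : ⟪T v, C (T w)⟫ = v.ofLp ⬝ᵥ G *ᵥ w.ofLp := by
  conv_lhs => rw [← (EuclideanSpace.basisFun ι ℝ).sum_repr v,
    ← (EuclideanSpace.basisFun ι ℝ).sum_repr w]
  simp [map_sum, inner_sum, sum_inner, real_inner_smul_left, real_inner_smul_right, dotProduct,
    Matrix.mulVec, Finset.mul_sum, hG]
  exact Finset.sum_comm.trans
    (Finset.sum_congr rfl fun i _ => Finset.sum_congr rfl fun j _ => by ring)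

end

lemma mul_one_sub_inv_sqrt_sq_le {d δ : ℝ} (hd : 0 < d) (hδ : |d - 1| ≤ δ) :
    d * (1 - (√d)⁻¹) ^ 2 ≤ δ ^ 2 := by
  have hsq := Real.mul_self_sqrt hd.le
  have hpos := Real.sqrt_pos.mpr hd
  have hsqrt : d * (1 - (√d)⁻¹) ^ 2 = (√d - 1) ^ 2 := by
    have : √d * (1 - (√d)⁻¹) = √d - 1 := by field_simp
    rw [← this, mul_pow, Real.sq_sqrt hd.le]
  have hle : |√d - 1| ≤ |d - 1| := by
    rw [show d - 1 = (√d - 1) * (√d + 1) by linear_combination -hsq, abs_mul]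
    refine le_mul_of_one_le_right (abs_nonneg _) ?_
    rw [abs_of_pos (by positivity)]
    linarith
  rw [hsqrt, ← sq_abs]
  exact pow_le_pow_left₀ (abs_nonneg _) (hle.trans hδ) 2

namespace Matrix

variable {ι κ R : Type*} [Fintype κ] [CommSemiring R]

lemma dotProduct_mul_mul_transpose_mulVec [Fintype ι] (A : Matrix ι κ R) (M : Matrix κ κ R)
    (v w : ι → R) : v ⬝ᵥ (A * M * Aᵀ) *ᵥ w = (Aᵀ *ᵥ v) ⬝ᵥ M *ᵥ (Aᵀ *ᵥ w) := by
  simp only [← mulVec_mulVec, dotProduct_mulVec, mulVec_transpose]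

lemma mul_diagonal_mul_transpose_apply [DecidableEq κ] (A : Matrix ι κ R) (d : κ → R) (i j : ι) :
    (A * diagonal d * Aᵀ) i j = ∑ l, A i l * d l * A j l := by
  rw [mul_apply]
  simp only [mul_diagonal, transpose_apply]

lemma mul_diagonal_mul_transpose_mulVec [Fintype ι] [DecidableEq κ] (A : Matrix ι κ R)
    (d : κ → R) (x : ι → R) : (A * diagonal d * Aᵀ) *ᵥ x = A *ᵥ fun l => d l * (Aᵀ *ᵥ x) l := by
  rw [← mulVec_mulVec, ← mulVec_mulVec]
  exact congrArg _ (funext (mulVec_diagonal _ _))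

lemma transpose_mulVec_dotProduct_self [Fintype ι] [DecidableEq ι] {A : Matrix ι κ R}
    (hA : A * Aᵀ = 1) (v : ι → R) : (Aᵀ *ᵥ v) ⬝ᵥ (Aᵀ *ᵥ v) = v ⬝ᵥ v := by
  classical
  simpa [hA, one_mulVec] using (dotProduct_mul_mul_transpose_mulVec A 1 v v).symm

lemma abs_sub_one_le_of_abs_dotProduct_diagonal_sub_le [Fintype ι] [DecidableEq ι]
    {A : Matrix ι ι ℝ} (hA : Aᵀ * A = 1) {D : ι → ℝ} {δ : ℝ}
    (h : ∀ v, |(Aᵀ *ᵥ v) ⬝ᵥ diagonal D *ᵥ (Aᵀ *ᵥ v) - v ⬝ᵥ v| ≤ δ * (v ⬝ᵥ v)) (l : ι) :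
    |D l - 1| ≤ δ := by
  have hcol : Aᵀ *ᵥ (A *ᵥ Pi.single l 1) = Pi.single l 1 := by
    rw [mulVec_mulVec, hA, one_mulVec]
  have hnorm : (A *ᵥ Pi.single l 1) ⬝ᵥ (A *ᵥ Pi.single l 1) = 1 := by
    simpa using transpose_mulVec_dotProduct_self (A := Aᵀ) (by simpa using hA) (Pi.single l 1)
  have hdiag : Pi.single l 1 ⬝ᵥ diagonal D *ᵥ Pi.single l 1 = D l := by
    simp
  have hl := h (A *ᵥ Pi.single l 1)
  rwa [hcol, hnorm, hdiag, mul_one] at hl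

lemma dotProduct_mulVec_one_sub_invSqrt_le [Fintype ι] [DecidableEq ι] {A : Matrix ι ι ℝ}
    (hA : A * Aᵀ = 1) (hA' : Aᵀ * A = 1) {D : ι → ℝ} (hD : ∀ l, 0 < D l) {δ : ℝ}
    (hδ : ∀ l, |D l - 1| ≤ δ) (a : ι → ℝ) :
    ((1 - A * diagonal (fun l => (√(D l))⁻¹) * Aᵀ) *ᵥ a) ⬝ᵥ (A * diagonal D * Aᵀ) *ᵥ
      ((1 - A * diagonal (fun l => (√(D l))⁻¹) * Aᵀ) *ᵥ a) ≤ δ ^ 2 * (a ⬝ᵥ a) := by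
  have hAe : Aᵀ *ᵥ ((1 - A * diagonal (fun l => (√(D l))⁻¹) * Aᵀ) *ᵥ a)
      = fun l => (1 - (√(D l))⁻¹) * (Aᵀ *ᵥ a) l := by
    rw [sub_mulVec, one_mulVec, mul_diagonal_mul_transpose_mulVec, mulVec_sub, mulVec_mulVec, hA',
      one_mulVec]
    ext l
    simp only [Pi.sub_apply]
    ring
  rw [dotProduct_mul_mul_transpose_mulVec, hAe, ← transpose_mulVec_dotProduct_self hA a,
    dotProduct, dotProduct, Finset.mul_sum]
  refine Finset.sum_le_sum fun l _ => ?_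
  calc _ = D l * (1 - (√(D l))⁻¹) ^ 2 * ((Aᵀ *ᵥ a) l * (Aᵀ *ᵥ a) l) := by
        simp only [mulVec_diagonal]; ring
    _ ≤ δ ^ 2 * ((Aᵀ *ᵥ a) l * (Aᵀ *ᵥ a) l) :=
        mul_le_mul_of_nonneg_right (mul_one_sub_inv_sqrt_sq_le (hD l) (hδ l)) (mul_self_nonneg _)

end Matrix

open Matrix

theorem whitening_perturbation_bound_general
    {F : Type*} [NormedAddCommGroup F] [InnerProductSpace ℝ F]
    {k : ℕ} (π : Fin k → ℝ) (μ : Fin k → F)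
    (hπ : ∀ h, 0 < π h)
    (C Chat B : F →L[ℝ] F)
    -- `C = M Diag(π) M* = ∑ h, π h • μ h ⊗ μ h`
    (hC : ∀ x : F, C x = ∑ h, (π h * ⟪μ h, x⟫) • μ h)
    (σk ε : ℝ)
    -- Courant–Fischer characterization of `σ_k(C)`
    (hσk : IsGreatest {t : ℝ | ∃ V : Submodule ℝ F,
      Module.finrank ℝ V = k ∧ ∀ x ∈ V, t * ‖x‖ ^ 2 ≤ ⟪x, C x⟫} σk)
    (hε : ‖C - Chat‖ = ε) (hεsmall : ε < 0.5 * σk)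
    -- `B = 0.5 (Ĉ + Ĉ*)`
    (hB : ∀ x y : F, ⟪B x, y⟫ = (1 / 2) * (⟪Chat x, y⟫ + ⟪x, Chat y⟫))
    -- top-`k` eigenpairs of `B`
    (u : Fin k → F) (s : Fin k → ℝ) (hu : Orthonormal ℝ u)
    (hBu : ∀ i, B (u i) = s i • u i)
    (htop : ∀ i : Fin k, IsGreatest {t : ℝ | ∃ V : Submodule ℝ F,
      Module.finrank ℝ V = (i : ℕ) + 1 ∧ ∀ x ∈ V, t * ‖x‖ ^ 2 ≤ ⟪x, B x⟫} (s i))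
    -- `Ŵ = Û_k Ŝ_k^{-1/2}`
    (What W : EuclideanSpace ℝ (Fin k) →ₗ[ℝ] F)
    (hWhat : ∀ a : EuclideanSpace ℝ (Fin k),
      What a = ∑ i, ((Real.sqrt (s i))⁻¹ * a i) • u i)
    -- eigendecomposition `Ŵ* C Ŵ = A D A*` with `A` orthogonal, `D` positive
    (A : Matrix (Fin k) (Fin k) ℝ) (D : Fin k → ℝ)
    (hA : A * A.transpose = 1) (hA' : A.transpose * A = 1) (hD : ∀ l, 0 < D l)
    (hADA : ∀ i j, ⟪What (EuclideanSpace.single i 1),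
        C (What (EuclideanSpace.single j 1))⟫ = ∑ l, A i l * D l * A j l)
    -- `W = Ŵ A D^{-1/2} A*`
    (hW : ∀ a : EuclideanSpace ℝ (Fin k),
      W a = What ((WithLp.equiv 2 (Fin k → ℝ)).symm
        (fun i => ∑ l, A i l * ((Real.sqrt (D l))⁻¹ * ∑ j, A j l * a j)))) :
    ∀ a : EuclideanSpace ℝ (Fin k),
      Real.sqrt (∑ h, (Real.sqrt (π h) * ⟪μ h, What a - W a⟫) ^ 2)
        ≤ (4 * ε / σk) * ‖a‖ := by
  intro a
  have hε0 : 0 ≤ ε := hε ▸ norm_nonneg _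
  have hσ : 0 < σk := by linarith
  have hCB : ∀ x, |⟪x, C x⟫ - ⟪x, B x⟫| ≤ ε * ‖x‖ ^ 2 :=
    hε ▸ abs_inner_self_sub_inner_symmPart_le hB
  have hs : ∀ i, σk / 2 ≤ s i := fun i => by
    have := (htop i).2 (sub_mem_courantFischerSet hCB (courantFischerSet_antitone C i.isLt hσk.1))
    linarith
  have hgram := inner_apply_apply_eq_dotProduct_mulVec What C fun i j =>
    (hADA i j).trans (mul_diagonal_mul_transpose_apply A D i j).symm
  have hD1 : ∀ l, |D l - 1| ≤ 2 * ε / σk := by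
    refine abs_sub_one_le_of_abs_dotProduct_diagonal_sub_le hA' fun v => ?_
    have h := abs_inner_whiten_sub_dotProduct_le hε0 hCB hu hBu (by positivity) hs v
    rwa [whiten, ← hWhat, hgram, dotProduct_mul_mul_transpose_mulVec, div_div_eq_mul_div,
      mul_comm ε] at h
  have hWa : What a - W a
      = What (WithLp.toLp 2 ((1 - A * diagonal (fun l => (√(D l))⁻¹) * Aᵀ) *ᵥ a.ofLp)) := by
    rw [hW, ← map_sub, sub_mulVec, one_mulVec, mul_diagonal_mul_transpose_mulVec]
    rfl
  rw [hWa, sum_sq_sqrt_mul_inner_eq_inner (fun h => (hπ h).le) hC, hgram]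
  calc _ ≤ √((2 * ε / σk) ^ 2 * ‖a‖ ^ 2) := by
        gcongr
        rw [← real_inner_self_eq_norm_sq, EuclideanSpace.inner_eq_star_dotProduct, star_trivial,
          WithLp.ofLp_toLp]
        exact dotProduct_mulVec_one_sub_invSqrt_le hA hA' hD hD1 a.ofLp
    _ = 2 * ε / σk * ‖a‖ := by
        rw [← mul_pow, Real.sqrt_sq (by positivity)]
    _ ≤ 4 * ε / σk * ‖a‖ := by gcongr; linarith

/-- Whitening perturbation bound.  For `C = M Diag(π) M*` of rank `k` and a
perturbation `Ĉ` with `ε = ‖C − Ĉ‖ < 0.5 σ_k(C)`, let `Ŵ = Û_k Ŝ_k^{-1/2}` be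
the whitening map built from the top-`k` eigendecomposition of
`B = 0.5(Ĉ + Ĉ*)`, and let `W = Ŵ A D^{-1/2} A*` where `Ŵ* C Ŵ = A D A*`.
Then `‖Diag(π)^{1/2} M* (Ŵ − W)‖ ≤ 4 ε / σ_k(C)` (as an operator bound). -/
theorem whitening_perturbation_bound
    {F : Type*} [NormedAddCommGroup F] [InnerProductSpace ℝ F] [CompleteSpace F]
    {k : ℕ} (π : Fin k → ℝ) (μ : Fin k → F)
    (hπ : ∀ h, 0 < π h) (hind : LinearIndependent ℝ μ)
    (C Chat B : F →L[ℝ] F)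
    -- `C = M Diag(π) M* = ∑ h, π h • μ h ⊗ μ h`
    (hC : ∀ x : F, C x = ∑ h, (π h * ⟪μ h, x⟫) • μ h)
    (σk ε : ℝ)
    -- Courant–Fischer characterization of `σ_k(C)`
    (hσk : IsGreatest {t : ℝ | ∃ V : Submodule ℝ F,
      Module.finrank ℝ V = k ∧ ∀ x ∈ V, t * ‖x‖ ^ 2 ≤ ⟪x, C x⟫} σk)
    (hε : ‖C - Chat‖ = ε) (hεsmall : ε < 0.5 * σk)
    -- `B = 0.5 (Ĉ + Ĉ*)`
    (hB : ∀ x y : F, ⟪B x, y⟫ = (1 / 2) * (⟪Chat x, y⟫ + ⟪x, Chat y⟫))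
    -- top-`k` eigenpairs of `B`
    (u : Fin k → F) (s : Fin k → ℝ) (hu : Orthonormal ℝ u)
    (hBu : ∀ i, B (u i) = s i • u i)
    (htop : ∀ i : Fin k, IsGreatest {t : ℝ | ∃ V : Submodule ℝ F,
      Module.finrank ℝ V = (i : ℕ) + 1 ∧ ∀ x ∈ V, t * ‖x‖ ^ 2 ≤ ⟪x, B x⟫} (s i))
    -- `Ŵ = Û_k Ŝ_k^{-1/2}`
    (What W : EuclideanSpace ℝ (Fin k) →ₗ[ℝ] F)
    (hWhat : ∀ a : EuclideanSpace ℝ (Fin k),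
      What a = ∑ i, ((Real.sqrt (s i))⁻¹ * a i) • u i)
    -- eigendecomposition `Ŵ* C Ŵ = A D A*` with `A` orthogonal, `D` positive
    (A : Matrix (Fin k) (Fin k) ℝ) (D : Fin k → ℝ)
    (hA : A * A.transpose = 1) (hA' : A.transpose * A = 1) (hD : ∀ l, 0 < D l)
    (hADA : ∀ i j, ⟪What (EuclideanSpace.single i 1),
        C (What (EuclideanSpace.single j 1))⟫ = ∑ l, A i l * D l * A j l)
    -- `W = Ŵ A D^{-1/2} A*`
    (hW : ∀ a : EuclideanSpace ℝ (Fin k),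
      W a = What ((WithLp.equiv 2 (Fin k → ℝ)).symm
        (fun i => ∑ l, A i l * ((Real.sqrt (D l))⁻¹ * ∑ j, A j l * a j)))) :
    ∀ a : EuclideanSpace ℝ (Fin k),
      Real.sqrt (∑ h, (Real.sqrt (π h) * ⟪μ h, What a - W a⟫) ^ 2)
        ≤ (4 * ε / σk) * ‖a‖ :=
  whitening_perturbation_bound_general π μ hπ C Chat B hC σk ε hσk hε hεsmall hB u s hu hBu htop
    What W hWhat A D hA hA' hD hADA hW
end

section
/- (Factorization of the triple embedding.) If X₁, X₂, X₃ are conditionally independent given H ∈ [k] with P(H=h)=π_h and shared conditional embedding μ_{X|h}, then E[φ(X₁)⊗φ(X₂)⊗φ(X₃)] = Σ_{h=1}^k π_h · μ_{X|h} ⊗ μ_{X|h} ⊗ μ_{X|h}. -/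
open MeasureTheory ProbabilityTheory
open scoped RealInnerProductSpace ProbabilityTheory

/-! Conditionally on `H = h` the three views are independent, so the mean of their elementary
tensor is `μ h ⊗ μ h ⊗ μ h`; averaging over the fibres of `H` gives the mixture. As `F` need not
be separable, the conditional factorization goes through inner products: against an elementary
tensor the integrand becomes a product of three independent real variables, and since the
candidate value is itself an elementary tensor, agreeing with the mean against all elementary
tensors forces it to be the mean. -/

section Cond

variable {Θ E : Type*} [MeasurableSpace Θ] [NormedAddCommGroup E]

theorem MeasureTheory.Integrable.cond {μ : Measure Θ} {f : Θ → E} (hf : Integrable f μ)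
    (s : Set Θ) : Integrable f μ[|s] := by
  by_cases hs : μ s = 0
  · simp [cond_eq_zero_of_meas_eq_zero hs]
  · exact hf.restrict.smul_measure (ENNReal.inv_ne_top.mpr hs)

theorem integral_eq_sum_smul_integral_cond_fiber [NormedSpace ℝ E] {α : Type*} [Fintype α]
    [MeasurableSpace α] [DiscreteMeasurableSpace α] {μ : Measure Θ} [IsFiniteMeasure μ]
    {H : Θ → α} (hH : Measurable H) {f : Θ → E} (hf : Integrable f μ) :
    ∫ θ, f θ ∂μ = ∑ x, μ.real (H ⁻¹' {x}) • ∫ θ, f θ ∂μ[|H ← x] := by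
  conv_lhs => rw [← sum_meas_smul_cond_fiber hH μ]
  rw [integral_finsetSum_measure fun x _ => (hf.cond _).smul_measure (measure_ne_top _ _)]
  simp only [integral_smul_measure, measureReal_def]

end Cond

theorem integral_eq_of_forall_inner_eq {Θ G : Type*} [MeasurableSpace Θ]
    [NormedAddCommGroup G] [InnerProductSpace ℝ G] [CompleteSpace G] {ν : Measure Θ} {f : Θ → G} (hf : Integrable f ν)
    {S : Set G} (hfS : ∀ᵐ θ ∂ν, f θ ∈ S) {w : G} (hw : w ∈ S)
    (h : ∀ x ∈ S, ⟪∫ θ, f θ ∂ν, x⟫ = ⟪w, x⟫) : ∫ θ, f θ ∂ν = w := by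
  set v := ∫ θ, f θ ∂ν
  have hS : ∀ x ∈ S, ⟪v - w, x⟫ = 0 := fun x hx => by rw [inner_sub_left, h x hx, sub_self]
  have hv : ⟪v - w, v⟫ = 0 := by
    rw [← integral_inner hf]
    exact integral_eq_zero_of_ae (hfS.mono fun θ hθ => hS _ hθ)
  have hvw : ⟪v - w, v - w⟫ = 0 := by rw [inner_sub_right, hv, hS w hw, sub_self]
  exact sub_eq_zero.mp (inner_self_eq_zero.mp hvw)

section Trilinear

variable {Θ E G : Type*} [MeasurableSpace Θ]
  [NormedAddCommGroup E] [InnerProductSpace ℝ E] [CompleteSpace E]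
  [MeasurableSpace E] [BorelSpace E]
  [NormedAddCommGroup G] [InnerProductSpace ℝ G] [CompleteSpace G]
  {T : E →L[ℝ] E →L[ℝ] E →L[ℝ] G}
  {ν : Measure Θ} {Y : Fin 3 → Θ → E}

theorem ProbabilityTheory.iIndepFun.inner_integral_trilin
    (hT : ∀ a b c a' b' c' : E, ⟪T a b c, T a' b' c'⟫ = ⟪a, a'⟫ * (⟪b, b'⟫ * ⟪c, c'⟫))
    (hY : iIndepFun Y ν) (hYint : ∀ i, Integrable (Y i) ν)
    (hint : Integrable (fun θ => T (Y 0 θ) (Y 1 θ) (Y 2 θ)) ν) (a b c : E) :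
    ⟪∫ θ, T (Y 0 θ) (Y 1 θ) (Y 2 θ) ∂ν, T a b c⟫
      = ⟪T (∫ θ, Y 0 θ ∂ν) (∫ θ, Y 1 θ ∂ν) (∫ θ, Y 2 θ ∂ν), T a b c⟫ := by
  have hmean : ∀ i x, ∫ θ, ⟪Y i θ, x⟫ ∂ν = ⟪∫ θ, Y i θ ∂ν, x⟫ := fun i x => by
    simpa only [real_inner_comm _ x] using integral_inner (𝕜 := ℝ) (hYint i) x
  let e : Fin 3 → E := ![a, b, c]
  calc ⟪∫ θ, T (Y 0 θ) (Y 1 θ) (Y 2 θ) ∂ν, T a b c⟫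
      = ∫ θ, ∏ i, ⟪Y i θ, e i⟫ ∂ν := by
        rw [real_inner_comm, ← integral_inner hint]
        simp [e, hT, Fin.prod_univ_three, real_inner_comm, mul_assoc]
    _ = ∏ i, ∫ θ, ⟪Y i θ, e i⟫ ∂ν :=
        hY.integral_fun_prod_comp (f := fun i y => ⟪y, e i⟫) (fun i => (hYint i).aemeasurable)
          fun i => (continuous_id.inner continuous_const).aestronglyMeasurable
    _ = ⟪T (∫ θ, Y 0 θ ∂ν) (∫ θ, Y 1 θ ∂ν) (∫ θ, Y 2 θ ∂ν), T a b c⟫ := by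
        simp [e, hT, Fin.prod_univ_three, hmean, mul_assoc]

theorem ProbabilityTheory.iIndepFun.integral_trilin
    (hT : ∀ a b c a' b' c' : E, ⟪T a b c, T a' b' c'⟫ = ⟪a, a'⟫ * (⟪b, b'⟫ * ⟪c, c'⟫))
    (hY : iIndepFun Y ν) (hYint : ∀ i, Integrable (Y i) ν)
    (hint : Integrable (fun θ => T (Y 0 θ) (Y 1 θ) (Y 2 θ)) ν) :
    ∫ θ, T (Y 0 θ) (Y 1 θ) (Y 2 θ) ∂ν
      = T (∫ θ, Y 0 θ ∂ν) (∫ θ, Y 1 θ ∂ν) (∫ θ, Y 2 θ ∂ν) :=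
  integral_eq_of_forall_inner_eq hint (S := Set.range fun p : E × E × E => T p.1 p.2.1 p.2.2)
    (ae_of_all _ fun θ => ⟨(Y 0 θ, Y 1 θ, Y 2 θ), rfl⟩) ⟨(_, _, _), rfl⟩
    (by rintro _ ⟨⟨a, b, c⟩, rfl⟩; exact hY.inner_integral_trilin hT hYint hint a b c)

end Trilinear

theorem triple_embedding_factorization_general
    {Ω F G Θ : Type*} [MeasurableSpace Ω]
    [NormedAddCommGroup F] [InnerProductSpace ℝ F] [CompleteSpace F]
    [MeasurableSpace F] [BorelSpace F]
    [NormedAddCommGroup G] [InnerProductSpace ℝ G] [CompleteSpace G]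
    [MeasureSpace Θ] [IsProbabilityMeasure (ℙ : Measure Θ)]
    {k : ℕ} (H : Θ → Fin k) (X : Fin 3 → Θ → Ω) (φ : Ω → F)
    (hH : Measurable H)
    (hφ : Measurable φ)
    (tp3 : F →L[ℝ] F →L[ℝ] F →L[ℝ] G)
    (htp3 : ∀ a b c a' b' c' : F,
      ⟪tp3 a b c, tp3 a' b' c'⟫ = ⟪a, a'⟫ * (⟪b, b'⟫ * ⟪c, c'⟫))
    (π : Fin k → ℝ) (μ : Fin k → F)
    (hπ : ∀ h, (ℙ {θ | H θ = h}).toReal = π h)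
    -- conditional independence of the three views given `H = h`
    (hindep : ∀ h, iIndepFun X (ℙ[|{θ | H θ = h}]))
    -- `μ h` is the conditional mean embedding of each view
    (hμ : ∀ h i, (∫ θ, φ (X i θ) ∂(ℙ[|{θ | H θ = h}])) = μ h)
    -- integrability
    (hinti : ∀ i, Integrable (fun θ => φ (X i θ)) ℙ)
    (hint : Integrable (fun θ => tp3 (φ (X 0 θ)) (φ (X 1 θ)) (φ (X 2 θ))) ℙ) :
    (∫ θ, tp3 (φ (X 0 θ)) (φ (X 1 θ)) (φ (X 2 θ)) ∂ℙ)
      = ∑ h, π h • tp3 (μ h) (μ h) (μ h) := by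
  rw [integral_eq_sum_smul_integral_cond_fiber hH hint]
  refine Finset.sum_congr rfl fun h _ => ?_
  have hcond : ∫ θ, tp3 (φ (X 0 θ)) (φ (X 1 θ)) (φ (X 2 θ)) ∂ℙ[|{θ | H θ = h}]
      = tp3 (μ h) (μ h) (μ h) := by
    have hY : iIndepFun (fun i θ => φ (X i θ)) ℙ[|{θ | H θ = h}] :=
      (hindep h).comp (fun _ => φ) fun _ => hφ
    rw [hY.integral_trilin htp3
      (fun i => (hinti i).cond _) (hint.cond _), hμ h 0, hμ h 1, hμ h 2]
  rw [← hπ h, ← hcond]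
  rfl

/-- Factorization of the triple embedding: if `X₁, X₂, X₃` are conditionally
independent given a discrete latent variable `H ∈ [k]` with `P(H = h) = π h`
and shared conditional mean embedding `μ h`, then
`E[φ(X₁) ⊗ φ(X₂) ⊗ φ(X₃)] = ∑ h, π h • μ h ⊗ μ h ⊗ μ h`.  The tensor product
`F ⊗ F ⊗ F` is modelled by a Hilbert space `G` with a trilinear map `tp3`. -/
theorem triple_embedding_factorization
    {Ω F G Θ : Type*} [MeasurableSpace Ω]
    [NormedAddCommGroup F] [InnerProductSpace ℝ F] [CompleteSpace F]
    [MeasurableSpace F] [BorelSpace F]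
    [NormedAddCommGroup G] [InnerProductSpace ℝ G] [CompleteSpace G]
    [MeasureSpace Θ] [IsProbabilityMeasure (ℙ : Measure Θ)]
    {k : ℕ} (H : Θ → Fin k) (X : Fin 3 → Θ → Ω) (φ : Ω → F)
    (hH : Measurable H) (hX : ∀ i, Measurable (X i))
    (hφ : Measurable φ)
    (tp3 : F →L[ℝ] F →L[ℝ] F →L[ℝ] G)
    (htp3 : ∀ a b c a' b' c' : F,
      ⟪tp3 a b c, tp3 a' b' c'⟫ = ⟪a, a'⟫ * (⟪b, b'⟫ * ⟪c, c'⟫))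
    (π : Fin k → ℝ) (μ : Fin k → F)
    (hπ : ∀ h, (ℙ {θ | H θ = h}).toReal = π h) (hπpos : ∀ h, 0 < π h)
    -- conditional independence of the three views given `H = h`
    (hindep : ∀ h, iIndepFun X (ℙ[|{θ | H θ = h}]))
    -- `μ h` is the conditional mean embedding of each view
    (hμ : ∀ h i, (∫ θ, φ (X i θ) ∂(ℙ[|{θ | H θ = h}])) = μ h)
    -- integrability
    (hinti : ∀ i, Integrable (fun θ => φ (X i θ)) ℙ)
    (hint : Integrable (fun θ => tp3 (φ (X 0 θ)) (φ (X 1 θ)) (φ (X 2 θ))) ℙ) :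
    (∫ θ, tp3 (φ (X 0 θ)) (φ (X 1 θ)) (φ (X 2 θ)) ∂ℙ)
      = ∑ h, π h • tp3 (μ h) (μ h) (μ h) :=
  triple_embedding_factorization_general H X φ hH hφ tp3 htp3 π μ hπ hindep hμ hinti hint
end
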